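/- Let f: R^d → R be self-concordant with minimizer x_* and Hessian H_* = ∇²f(x_*). If ‖x − x_*‖_* < 1 (where ‖v‖_* = √⟨H_* v, v⟩), then the Newton step error at x satisfies ‖x − x_* − H_*⁻¹∇f(x)‖_* ≤ ‖x − x_*‖_*² / (1 − ‖x − x_*‖_*). -/

import Mathlib

open Matrix MeasureTheory Filter
open scoped Classical

noncomputable section

/-- Vectors in `ℝ^d` with the Euclidean (2-)norm. -/
abbrev Vec (d : ℕ) := EuclideanSpace ℝ (Fin d)

/-- Matrix square root of a positive semidefinite matrix (junk value `0` otherwise). -/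
noncomputable def msqrt {d : ℕ} (M : Matrix (Fin d) (Fin d) ℝ) : Matrix (Fin d) (Fin d) ℝ :=
  if h : M.PosSemidef then
    h.1.eigenvectorUnitary.1 * diagonal ((RCLike.ofReal ∘ Real.sqrt ∘ h.1.eigenvalues : Fin d → ℝ)) *
      (star h.1.eigenvectorUnitary : Matrix (Fin d) (Fin d) ℝ) else 0

/-- Frobenius norm of a square matrix. -/
noncomputable def frobNorm {d : ℕ} (M : Matrix (Fin d) (Fin d) ℝ) : ℝ :=
  Real.sqrt (Matrix.trace (Mᵀ * M))

/-- Weighted Frobenius norm `‖W‖_{F(H)} = ‖H^{1/2} W H^{1/2}‖_F`. -/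
noncomputable def wFrob {d : ℕ} (H W : Matrix (Fin d) (Fin d) ℝ) : ℝ :=
  frobNorm (msqrt H * W * msqrt H)

/-- Local norm `‖v‖_H = √⟨H v, v⟩`. -/
noncomputable def localNorm {d : ℕ} (H : Matrix (Fin d) (Fin d) ℝ) (v : Vec d) : ℝ :=
  Real.sqrt (inner ℝ (Matrix.toEuclideanLin H v) v : ℝ)

/-- `f` is self-concordant, expressed through its Hessian map `Hf`:
the Hessian is everywhere positive definite and the local norms at nearby points are
comparable. -/
def SelfConcordant {d : ℕ} (Hf : Vec d → Matrix (Fin d) (Fin d) ℝ) : Prop :=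
  (∀ x, (Hf x).PosDef) ∧
  ∀ x y v : Vec d, localNorm (Hf x) (y - x) < 1 → v ≠ 0 →
    1 - localNorm (Hf x) (y - x) ≤ localNorm (Hf y) v / localNorm (Hf x) v ∧
      localNorm (Hf y) v / localNorm (Hf x) v ≤ 1 / (1 - localNorm (Hf x) (y - x))

/-- `g` is the gradient of `f` and `Hf` is its Hessian (the derivative of the gradient). -/
def IsGradHess {d : ℕ} (f : Vec d → ℝ) (g : Vec d → Vec d)
    (Hf : Vec d → Matrix (Fin d) (Fin d) ℝ) : Prop :=
  (∀ x, HasGradientAt f (g x) x) ∧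
  ∀ x, HasFDerivAt g (Matrix.toEuclideanCLM (𝕜 := ℝ) (Hf x) : Vec d →L[ℝ] Vec d) x

/-- Smallest eigenvalue of a symmetric matrix, via the Rayleigh quotient. -/
noncomputable def lambdaMin {d : ℕ} (M : Matrix (Fin d) (Fin d) ℝ) : ℝ :=
  ⨅ v : {v : Vec d // ‖v‖ = 1}, (inner ℝ (Matrix.toEuclideanLin M v.1) v.1 : ℝ)

/-- Entrywise expectation of a random matrix. -/
noncomputable def expMat {Ω : Type*} [MeasurableSpace Ω] (μ : Measure Ω)
    {m n : ℕ} (M : Ω → Matrix (Fin m) (Fin n) ℝ) : Matrix (Fin m) (Fin n) ℝ :=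
  Matrix.of fun i j => ∫ ω, M ω i j ∂μ

/-- The projection matrix `Z = H^{1/2} S (Sᵀ H S)⁻¹ Sᵀ H^{1/2}`. -/
noncomputable def sketchProj {d τ : ℕ} (H : Matrix (Fin d) (Fin d) ℝ)
    (S : Matrix (Fin d) (Fin τ) ℝ) : Matrix (Fin d) (Fin d) ℝ :=
  msqrt H * S * (Sᵀ * H * S)⁻¹ * Sᵀ * msqrt H

/-- The (randomized) BFGS update
`BFGS(B, H, S) = G + (I - G H) B (I - H G)` with `G = S (Sᵀ H S)⁻¹ Sᵀ`. -/
noncomputable def bfgsUpdate {d τ : ℕ} (B H : Matrix (Fin d) (Fin d) ℝ)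
    (S : Matrix (Fin d) (Fin τ) ℝ) : Matrix (Fin d) (Fin d) ℝ :=
  S * (Sᵀ * H * S)⁻¹ * Sᵀ +
    (1 - S * (Sᵀ * H * S)⁻¹ * Sᵀ * H) * B * (1 - H * (S * (Sᵀ * H * S)⁻¹ * Sᵀ))

/-- Spectral (operator 2-)norm of a matrix. -/
noncomputable def opNorm2 {d : ℕ} (M : Matrix (Fin d) (Fin d) ℝ) : ℝ :=
  ‖(Matrix.toEuclideanCLM (𝕜 := ℝ) M : Vec d →L[ℝ] Vec d)‖

instance matrixMeasurableSpace {m n : Type*} : MeasurableSpace (Matrix m n ℝ) :=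
  MeasurableSpace.pi

/-- The sketching matrices `S k` are i.i.d. samples from a common distribution `D`. -/
def IIDSketch {d τ : ℕ} {Ω : Type*} [MeasurableSpace Ω] (μ : Measure Ω)
    (S : ℕ → Ω → Matrix (Fin d) (Fin τ) ℝ) : Prop :=
  (∀ k, Measurable (S k)) ∧
  ProbabilityTheory.iIndepFun (m := fun _ => matrixMeasurableSpace) S μ ∧
  ∀ k, Measure.map (S k) μ = Measure.map (S 0) μ

end

/-! With `H = ∇²f(x⋆)`, `r = x - x⋆`, `λ = ‖r‖⋆` and `e` the Newton-step error, `H e = H r - ∇f(x)`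
and `∇f(x⋆) = 0`, so `‖e‖⋆² = -⟪∇f(x) - ∇f(x⋆) - H r, e⟫`. Along the segment `x⋆ + t r` this pairing
has derivative `⟪(∇²f(x⋆ + t r) - H) r, e⟫`. Self-concordance squeezes `∇²f(x⋆ + t r)` between
`(1 - tλ)² H` and `H / (1 - tλ)²`, which by polarization bounds that derivative by
`((1 - tλ)⁻² - 1) λ ‖e‖⋆`; integrating over `[0, 1]` gives `‖e‖⋆² ≤ λ² / (1 - λ) ‖e‖⋆`. -/

section LocalNorm

variable {d : ℕ}

lemma inner_toEuclideanLin_comm {M : Matrix (Fin d) (Fin d) ℝ} (hM : M.IsHermitian)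
    (v w : Vec d) :
    inner ℝ (toEuclideanLin M v) w = inner ℝ (toEuclideanLin M w) v := by
  rw [isSymmetric_toEuclideanLin_iff.mpr hM v w, real_inner_comm]

lemma inner_toEuclideanLin_self_nonneg {M : Matrix (Fin d) (Fin d) ℝ} (hM : M.PosSemidef)
    (v : Vec d) : 0 ≤ inner ℝ (toEuclideanLin M v) v :=
  (isPositive_toEuclideanLin_iff.mpr hM).inner_nonneg_left v

lemma inner_toEuclideanLin_self_pos {M : Matrix (Fin d) (Fin d) ℝ} (hM : M.PosDef)
    {v : Vec d} (hv : v ≠ 0) : 0 < inner ℝ (toEuclideanLin M v) v := by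
  have := hM.dotProduct_mulVec_pos (x := WithLp.ofLp v) (by simpa using hv)
  simpa [EuclideanSpace.inner_eq_star_dotProduct, dotProduct_comm] using this

lemma localNorm_nonneg (M : Matrix (Fin d) (Fin d) ℝ) (v : Vec d) : 0 ≤ localNorm M v :=
  Real.sqrt_nonneg _

@[simp]
lemma localNorm_zero (M : Matrix (Fin d) (Fin d) ℝ) : localNorm M 0 = 0 := by
  simp [localNorm]

lemma sq_localNorm {M : Matrix (Fin d) (Fin d) ℝ} (hM : M.PosSemidef) (v : Vec d) :
    localNorm M v ^ 2 = inner ℝ (toEuclideanLin M v) v :=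
  Real.sq_sqrt (inner_toEuclideanLin_self_nonneg hM v)

lemma localNorm_pos {M : Matrix (Fin d) (Fin d) ℝ} (hM : M.PosDef) {v : Vec d} (hv : v ≠ 0) :
    0 < localNorm M v :=
  Real.sqrt_pos.mpr (inner_toEuclideanLin_self_pos hM hv)

lemma localNorm_smul (M : Matrix (Fin d) (Fin d) ℝ) (t : ℝ) (v : Vec d) :
    localNorm M (t • v) = |t| * localNorm M v := by
  rw [localNorm, localNorm, map_smul, real_inner_smul_left, real_inner_smul_right, ← mul_assoc,
    ← sq, Real.sqrt_mul (sq_nonneg t), Real.sqrt_sq_eq_abs]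

lemma inner_toEuclideanLin_add_smul_self {A : Matrix (Fin d) (Fin d) ℝ} (hA : A.IsHermitian)
    (p q : Vec d) (α β : ℝ) :
    inner ℝ (toEuclideanLin A (α • p + β • q)) (α • p + β • q) =
      α ^ 2 * inner ℝ (toEuclideanLin A p) p + 2 * α * β * inner ℝ (toEuclideanLin A p) q +
        β ^ 2 * inner ℝ (toEuclideanLin A q) q := by
  simp only [map_add, map_smul, inner_add_left, inner_add_right, real_inner_smul_left,
    real_inner_smul_right, inner_toEuclideanLin_comm hA q p]
  ring

lemma abs_inner_toEuclideanLin_le_of_abs_quadratic_le {M H : Matrix (Fin d) (Fin d) ℝ}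
    (hM : M.IsHermitian) (hH : H.PosDef) {c : ℝ}
    (hquad : ∀ v : Vec d, |inner ℝ (toEuclideanLin M v) v| ≤ c * inner ℝ (toEuclideanLin H v) v)
    (r u : Vec d) :
    |inner ℝ (toEuclideanLin M r) u| ≤ c * localNorm H r * localNorm H u := by
  rcases eq_or_ne r 0 with rfl | hr
  · simp
  rcases eq_or_ne u 0 with rfl | hu
  · simp
  set a := localNorm H r
  set b := localNorm H u
  have ha : 0 < a := localNorm_pos hH hr
  have hb : 0 < b := localNorm_pos hH hu
  have ha2 := sq_localNorm hH.posSemidef r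
  have hb2 := sq_localNorm hH.posSemidef u
  -- evaluate the quadratic bound at `b r ± a u`, the choice that balances both terms
  have hplus := abs_le.mp (hquad (b • r + a • u))
  have hminus := abs_le.mp (hquad (b • r + (-a) • u))
  rw [inner_toEuclideanLin_add_smul_self hM, inner_toEuclideanLin_add_smul_self hH.1,
    ← ha2, ← hb2] at hplus hminus
  have hab : 0 < a * b := mul_pos ha hb
  rw [abs_le]
  constructor <;> nlinarith

end LocalNorm

lemma hasDerivAt_one_div_one_sub_mul_sub_one_sub_mul {a t : ℝ} (ht : 1 - t * a ≠ 0) :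
    HasDerivAt (fun s => 1 / (1 - s * a) - 1 - s * a) (a / (1 - t * a) ^ 2 - a) t := by
  have hlin : HasDerivAt (fun s => 1 - s * a) (-a) t := by
    simpa using ((hasDerivAt_id t).mul_const a).const_sub 1
  have := ((hlin.inv ht).sub_const 1).sub ((hasDerivAt_id t).mul_const a)
  simp only [one_div]
  exact this.congr_deriv (by ring)

namespace SelfConcordant

variable {d : ℕ} {Hf : Vec d → Matrix (Fin d) (Fin d) ℝ}

lemma localNorm_bounds (hsc : SelfConcordant Hf) {x y : Vec d}
    (hxy : localNorm (Hf x) (y - x) < 1) (v : Vec d) :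
    (1 - localNorm (Hf x) (y - x)) * localNorm (Hf x) v ≤ localNorm (Hf y) v ∧
      localNorm (Hf y) v ≤ localNorm (Hf x) v / (1 - localNorm (Hf x) (y - x)) := by
  rcases eq_or_ne v 0 with rfl | hv
  · simp
  have hs : 0 < 1 - localNorm (Hf x) (y - x) := sub_pos.mpr hxy
  have hvx := localNorm_pos (hsc.1 x) hv
  obtain ⟨hlower, hupper⟩ := hsc.2 x y v hxy hv
  rw [le_div_iff₀ hvx] at hlower
  rw [div_le_div_iff₀ hvx hs] at hupper
  exact ⟨hlower, (le_div_iff₀ hs).mpr (by linarith)⟩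

lemma abs_inner_sub_hessian_self_le (hsc : SelfConcordant Hf) {x y : Vec d}
    (hxy : localNorm (Hf x) (y - x) < 1) (v : Vec d) :
    |inner ℝ (toEuclideanLin (Hf y - Hf x) v) v| ≤
      (1 / (1 - localNorm (Hf x) (y - x)) ^ 2 - 1) * inner ℝ (toEuclideanLin (Hf x) v) v := by
  set k := (1 - localNorm (Hf x) (y - x)) ^ 2
  have hk : 0 < k := pow_pos (sub_pos.mpr hxy) 2
  have hk1 : k ≤ 1 := by
    have := localNorm_nonneg (Hf x) (y - x)
    exact pow_le_one₀ (by linarith) (by linarith)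
  obtain ⟨hlower, hupper⟩ := hsc.localNorm_bounds hxy v
  have hlower2 : k * localNorm (Hf x) v ^ 2 ≤ localNorm (Hf y) v ^ 2 := by
    rw [← mul_pow]
    exact pow_le_pow_left₀ (mul_nonneg (by linarith) (localNorm_nonneg _ _)) hlower 2
  have hupper2 : localNorm (Hf y) v ^ 2 ≤ localNorm (Hf x) v ^ 2 / k := by
    rw [← div_pow]; exact pow_le_pow_left₀ (localNorm_nonneg _ _) hupper 2
  rw [sq_localNorm (hsc.1 x).posSemidef, sq_localNorm (hsc.1 y).posSemidef] at hlower2 hupper2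
  rw [map_sub, LinearMap.sub_apply, inner_sub_left, abs_le]
  have hq := inner_toEuclideanLin_self_nonneg (hsc.1 x).posSemidef v
  -- `1 - k ≤ 1 / k - 1` is `k + 1 / k ≥ 2`
  have hk' : 1 - k ≤ 1 / k - 1 := by
    rw [le_sub_iff_add_le, le_div_iff₀ hk]; nlinarith [sq_nonneg (1 - k)]
  constructor
  · nlinarith [mul_le_mul_of_nonneg_right hk' hq]
  · rw [sub_mul, one_mul, div_mul_eq_mul_div, one_mul]; linarith

lemma abs_inner_sub_hessian_le (hsc : SelfConcordant Hf) {x y : Vec d}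
    (hxy : localNorm (Hf x) (y - x) < 1) (r u : Vec d) :
    |inner ℝ (toEuclideanLin (Hf y - Hf x) r) u| ≤
      (1 / (1 - localNorm (Hf x) (y - x)) ^ 2 - 1) * localNorm (Hf x) r * localNorm (Hf x) u :=
  abs_inner_toEuclideanLin_le_of_abs_quadratic_le ((hsc.1 y).1.sub (hsc.1 x).1) (hsc.1 x)
    (hsc.abs_inner_sub_hessian_self_le hxy) r u

theorem abs_inner_gradient_remainder_le (hsc : SelfConcordant Hf) {g : Vec d → Vec d}
    (hg : ∀ x, HasFDerivAt g (toEuclideanCLM (𝕜 := ℝ) (Hf x) : Vec d →L[ℝ] Vec d) x)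
    {x₀ x : Vec d} (hx : localNorm (Hf x₀) (x - x₀) < 1) (u : Vec d) :
    |inner ℝ (g x - g x₀ - toEuclideanLin (Hf x₀) (x - x₀)) u| ≤
      localNorm (Hf x₀) (x - x₀) ^ 2 / (1 - localNorm (Hf x₀) (x - x₀)) *
        localNorm (Hf x₀) u := by
  set r := x - x₀
  set lam := localNorm (Hf x₀) r
  set ν := localNorm (Hf x₀) u
  have hlam : 0 ≤ lam := localNorm_nonneg _ _
  let φ : ℝ → ℝ := fun t => inner ℝ (g (x₀ + t • r) - g x₀ - t • toEuclideanLin (Hf x₀) r) u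
  have hφ : ∀ t, HasDerivAt φ (inner ℝ (toEuclideanLin (Hf (x₀ + t • r) - Hf x₀) r) u) t := by
    intro t
    have hcurve : HasDerivAt (fun s : ℝ => x₀ + s • r) r t := by
      simpa using ((hasDerivAt_id t).smul_const r).const_add x₀
    have hgrad := ((hg _).comp_hasDerivAt t hcurve).sub_const (g x₀) |>.sub
      ((hasDerivAt_id t).smul_const (toEuclideanLin (Hf x₀) r))
    refine (hgrad.inner ℝ (hasDerivAt_const t u)).congr_deriv ?_
    simp only [inner_zero_right, zero_add, one_smul, map_sub, LinearMap.sub_apply]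
    rfl
  have hbound : ∀ t ∈ Set.Ico (0 : ℝ) 1,
      ‖inner ℝ (toEuclideanLin (Hf (x₀ + t • r) - Hf x₀) r) u‖ ≤
        ν * (lam / (1 - t * lam) ^ 2 - lam) := by
    rintro t ⟨ht0, ht1⟩
    have hdist : localNorm (Hf x₀) (x₀ + t • r - x₀) = t * lam := by
      rw [add_sub_cancel_left, localNorm_smul, abs_of_nonneg ht0]
    have hdist1 : t * lam < 1 := by nlinarith
    have := hsc.abs_inner_sub_hessian_le (hdist ▸ hdist1) r u
    rw [hdist] at this
    rw [Real.norm_eq_abs]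
    convert this using 1
    ring
  have hB : ∀ t ∈ Set.Icc (0 : ℝ) 1, HasDerivAt (fun s => ν * (1 / (1 - s * lam) - 1 - s * lam))
      (ν * (lam / (1 - t * lam) ^ 2 - lam)) t := fun t ⟨_, ht1⟩ =>
    (hasDerivAt_one_div_one_sub_mul_sub_one_sub_mul (by nlinarith)).const_mul ν
  have hmvt := image_norm_le_of_norm_deriv_right_le_deriv_boundary'
    (fun t _ => (hφ t).continuousAt.continuousWithinAt) (fun t _ => (hφ t).hasDerivWithinAt)
    (by simp [φ]) (fun t ht => (hB t ht).continuousAt.continuousWithinAt)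
    (fun t ht => (hB t (Set.Ico_subset_Icc_self ht)).hasDerivWithinAt) hbound
    (Set.right_mem_Icc.mpr zero_le_one)
  have hlam1 : 1 - lam ≠ 0 := (sub_pos.mpr hx).ne'
  simp only [φ, one_smul, one_mul, Real.norm_eq_abs, show x₀ + r = x from add_sub_cancel x₀ x]
    at hmvt
  convert hmvt using 1
  field_simp
  ring

end SelfConcordant

/-- **Newton-step error bound at the optimum for self-concordant `f`.** -/
theorem newton_step_error_self_concordant
    {d : ℕ} (f : Vec d → ℝ) (g : Vec d → Vec d) (Hf : Vec d → Matrix (Fin d) (Fin d) ℝ)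
    (hfgH : IsGradHess f g Hf) (hsc : SelfConcordant Hf)
    (xstar : Vec d) (hmin : ∀ y, f xstar ≤ f y)
    (x : Vec d) (hx : localNorm (Hf xstar) (x - xstar) < 1) :
    localNorm (Hf xstar) (x - xstar - Matrix.toEuclideanLin (Hf xstar)⁻¹ (g x)) ≤
      localNorm (Hf xstar) (x - xstar) ^ 2 / (1 - localNorm (Hf xstar) (x - xstar)) := by
  obtain ⟨hgrad, hhess⟩ := hfgH
  set H := Hf xstar
  set e := x - xstar - toEuclideanLin H⁻¹ (g x)
  have hg0 : g xstar = 0 := by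
    have hloc : IsLocalMin f xstar := Filter.Eventually.of_forall hmin
    have := hloc.hasFDerivAt_eq_zero (hgrad xstar).hasFDerivAt
    simpa using this
  have hHe : toEuclideanLin H e = toEuclideanLin H (x - xstar) - g x := by
    have hH : H * H⁻¹ = 1 := mul_nonsing_inv _ (isUnit_iff_ne_zero.mpr (hsc.1 xstar).det_pos.ne')
    rw [map_sub, ← LinearMap.comp_apply (toEuclideanLin H), ← toLpLin_mul_same, hH, toLpLin_one,
      LinearMap.id_apply]
  have hsq : localNorm H e ^ 2 ≤
      localNorm H (x - xstar) ^ 2 / (1 - localNorm H (x - xstar)) * localNorm H e :=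
    calc localNorm H e ^ 2
        = -inner ℝ (g x - g xstar - toEuclideanLin H (x - xstar)) e := by
          rw [sq_localNorm (hsc.1 xstar).posSemidef, hHe, hg0, ← inner_neg_left]
          congr 1
          abel
      _ ≤ _ := (neg_le_abs _).trans (hsc.abs_inner_gradient_remainder_le hhess hx e)
  have hrhs : 0 ≤ localNorm H (x - xstar) ^ 2 / (1 - localNorm H (x - xstar)) :=
    div_nonneg (sq_nonneg _) (sub_pos.mpr hx).le
  nlinarith [localNorm_nonneg H e]
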